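/- Let n ≥ 3, let 1 < r < n, and let a = (1, 2, …, r−1, −(n−r), …, −2, −1) ∈ ℂ^{n−1}. Then the pair (X(a) + Y_0^{n−2}, Y_0) is simultaneously conjugate to the pair (X(a), Y_0); in particular X(a) + Y_0^{n−2} is nilpotent. -/

import Mathlib

open Matrix Polynomial

noncomputable section

/-- `n×n` complex matrices. -/
abbrev Mat (n : ℕ) := Matrix (Fin n) (Fin n) ℂ

/-- The Calogero–Moser condition: `[X,Y] + I` has rank one. -/
def IsCMPair {n : ℕ} (P : Mat n × Mat n) : Prop :=
  (P.1 * P.2 - P.2 * P.1 + 1).rank = 1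

/-- Simultaneous conjugacy of pairs of matrices. -/
def SimConj {n : ℕ} (P Q : Mat n × Mat n) : Prop :=
  ∃ A : (Mat n)ˣ, Q.1 = ↑A⁻¹ * P.1 * ↑A ∧ Q.2 = ↑A⁻¹ * P.2 * ↑A

/-- Conjugation by a unit, as a `ℂ`-algebra homomorphism. -/
def conjAlgHom {n : ℕ} (A : (Mat n)ˣ) : Mat n →ₐ[ℂ] Mat n where
  toFun X := ↑A⁻¹ * X * ↑A
  map_one' := by show (↑A⁻¹ : Mat n) * 1 * ↑A = 1; rw [mul_one, Units.inv_mul]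
  map_mul' X Y := by simp only [mul_assoc, Units.mul_inv_cancel_left]
  map_zero' := by simp only [mul_zero, zero_mul]
  map_add' X Y := by simp only [mul_add, add_mul]
  commutes' r := by
    show (↑A⁻¹ : Mat n) * algebraMap ℂ (Mat n) r * ↑A = algebraMap ℂ (Mat n) r
    rw [mul_assoc, Algebra.commutes r ((A : Mat n)), ← mul_assoc, Units.inv_mul, one_mul]

lemma conjAlgHom_apply {n : ℕ} (A : (Mat n)ˣ) (X : Mat n) :
    conjAlgHom A X = ↑A⁻¹ * X * ↑A := rfl

lemma simConj_refl {n : ℕ} (P : Mat n × Mat n) : SimConj P P :=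
  ⟨1, by rw [inv_one, Units.val_one, one_mul, mul_one],
      by rw [inv_one, Units.val_one, one_mul, mul_one]⟩

lemma simConj_symm {n : ℕ} {P Q : Mat n × Mat n} (h : SimConj P Q) : SimConj Q P := by
  obtain ⟨A, h1, h2⟩ := h
  refine ⟨A⁻¹, ?_, ?_⟩
  · rw [inv_inv, h1]
    simp only [mul_assoc, Units.mul_inv_cancel_left, Units.mul_inv, mul_one]
  · rw [inv_inv, h2]
    simp only [mul_assoc, Units.mul_inv_cancel_left, Units.mul_inv, mul_one]

lemma simConj_trans {n : ℕ} {P Q R : Mat n × Mat n} (h : SimConj P Q) (h' : SimConj Q R) :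
    SimConj P R := by
  obtain ⟨A, h1, h2⟩ := h
  obtain ⟨B, h1', h2'⟩ := h'
  refine ⟨A * B, ?_, ?_⟩
  · rw [h1', h1, _root_.mul_inv_rev, Units.val_mul, Units.val_mul]
    simp only [mul_assoc]
  · rw [h2', h2, _root_.mul_inv_rev, Units.val_mul, Units.val_mul]
    simp only [mul_assoc]

/-- The setoid of simultaneous conjugacy on Calogero–Moser pairs. -/
def CMSetoid (n : ℕ) : Setoid {P : Mat n × Mat n // IsCMPair P} where
  r P Q := SimConj P.1 Q.1
  iseqv := ⟨fun P => simConj_refl P.1, simConj_symm, simConj_trans⟩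

/-- The `n`-th Calogero–Moser space: simultaneous conjugacy classes of pairs
`(X,Y)` of `n×n` complex matrices with `rank ([X,Y] + 1) = 1`. -/
def CMSpace (n : ℕ) := Quotient (CMSetoid n)

/-- The class of a Calogero–Moser pair in the Calogero–Moser space. -/
def CMSpace.mk {n : ℕ} (P : Mat n × Mat n) (h : IsCMPair P) : CMSpace n :=
  Quotient.mk (CMSetoid n) ⟨P, h⟩

/-- The action `Φ_p (X,Y) = (X + p(Y), Y)` on pairs of matrices. -/
def phiPair {n : ℕ} (p : ℂ[X]) (P : Mat n × Mat n) : Mat n × Mat n :=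
  (P.1 + aeval P.2 p, P.2)

/-- The action `Ψ_q (X,Y) = (X, Y + q(X))` on pairs of matrices. -/
def psiPair {n : ℕ} (q : ℂ[X]) (P : Mat n × Mat n) : Mat n × Mat n :=
  (P.1, P.2 + aeval P.1 q)

lemma commute_aeval {n : ℕ} (Y : Mat n) (p : ℂ[X]) : Commute (aeval Y p) Y := by
  simpa using (Commute.all p Polynomial.X).map (aeval Y)

lemma isCMPair_phiPair {n : ℕ} (p : ℂ[X]) {P : Mat n × Mat n} (h : IsCMPair P) :
    IsCMPair (phiPair p P) := by
  have hc := (commute_aeval P.2 p).eq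
  unfold IsCMPair phiPair at *
  dsimp only
  rw [add_mul, mul_add, hc]
  convert h using 2
  abel

lemma isCMPair_psiPair {n : ℕ} (q : ℂ[X]) {P : Mat n × Mat n} (h : IsCMPair P) :
    IsCMPair (psiPair q P) := by
  have hc := (commute_aeval P.1 q).eq
  unfold IsCMPair psiPair at *
  dsimp only
  rw [add_mul, mul_add, hc]
  convert h using 2
  abel

lemma simConj_phiPair {n : ℕ} (p : ℂ[X]) {P Q : Mat n × Mat n} (h : SimConj P Q) :
    SimConj (phiPair p P) (phiPair p Q) := by
  obtain ⟨A, h1, h2⟩ := h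
  refine ⟨A, ?_, h2⟩
  have hconj : aeval ((↑A⁻¹ : Mat n) * P.2 * (↑A : Mat n)) p
      = (↑A⁻¹ : Mat n) * aeval P.2 p * (↑A : Mat n) := by
    simpa only [conjAlgHom_apply] using aeval_algHom_apply (conjAlgHom A) P.2 p
  show Q.1 + aeval Q.2 p = (↑A⁻¹ : Mat n) * (P.1 + aeval P.2 p) * (↑A : Mat n)
  rw [h1, h2, hconj, mul_add, add_mul]

lemma simConj_psiPair {n : ℕ} (q : ℂ[X]) {P Q : Mat n × Mat n} (h : SimConj P Q) :
    SimConj (psiPair q P) (psiPair q Q) := by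
  obtain ⟨A, h1, h2⟩ := h
  refine ⟨A, h1, ?_⟩
  have hconj : aeval ((↑A⁻¹ : Mat n) * P.1 * (↑A : Mat n)) q
      = (↑A⁻¹ : Mat n) * aeval P.1 q * (↑A : Mat n) := by
    simpa only [conjAlgHom_apply] using aeval_algHom_apply (conjAlgHom A) P.1 q
  show Q.2 + aeval Q.1 q = (↑A⁻¹ : Mat n) * (P.2 + aeval P.1 q) * (↑A : Mat n)
  rw [h1, h2, hconj, mul_add, add_mul]

/-- The action `Φ_p` on the Calogero–Moser space. -/
def Phi {n : ℕ} (p : ℂ[X]) : CMSpace n → CMSpace n :=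
  @Quotient.map _ _ (CMSetoid n) (CMSetoid n)
    (fun P => ⟨phiPair p P.1, isCMPair_phiPair p P.2⟩)
    (fun _ _ h => simConj_phiPair p h)

/-- The action `Ψ_q` on the Calogero–Moser space. -/
def Psi {n : ℕ} (q : ℂ[X]) : CMSpace n → CMSpace n :=
  @Quotient.map _ _ (CMSetoid n) (CMSetoid n)
    (fun P => ⟨psiPair q P.1, isCMPair_psiPair q P.2⟩)
    (fun _ _ h => simConj_psiPair q h)


-- matrices block
/-- The subdiagonal matrix `X(a)` with `(i+1,i)` entry `a i` (1-indexed). -/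
def subd (n : ℕ) (a : ℕ → ℂ) : Mat n :=
  Matrix.of fun i j => if (i : ℕ) = (j : ℕ) + 1 then a (i : ℕ) else 0

/-- The matrix `X₀` with subdiagonal entries `1, 2, …, n-1`. -/
def X0 (n : ℕ) : Mat n := subd n (fun i => (i : ℂ))

/-- The matrix `Y₀` with superdiagonal entries all `1`. -/
def Y0 (n : ℕ) : Mat n :=
  Matrix.of fun i j => if (j : ℕ) = (i : ℕ) + 1 then 1 else 0

/-- The vector `a(r) = (1, 2, …, r-1, -(n-r), …, -2, -1)` (1-indexed entries `1,…,n-1`). -/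
def avec (n r : ℕ) : ℕ → ℂ := fun i => if i < r then (i : ℂ) else (i : ℂ) - n


/-! `N = Y₀^{n-1}` is the matrix unit in the top-right corner, so `N² = 0`, `N` commutes with
`Y₀` and `Y₀^{n-2} N = 0`. Moreover `[X(a), N] = a₁ E_{2,n} - a_{n-1} E_{1,n-1}`, which for our
`a` (with `a₁ = 1` and `a_{n-1} = -1`) is `E_{1,n-1} + E_{2,n} = Y₀^{n-2}`. Hence
`(X(a) + Y₀^{n-2}) (1 - N) = (1 - N) X(a)`: conjugation by the unipotent matrix `1 - N` fixes
`Y₀` and carries `X(a) + Y₀^{n-2}` to `X(a)`, which is strictly lower triangular, hence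
nilpotent. -/

lemma add_mul_one_sub_eq_one_sub_mul {R : Type*} [Ring R] {x c u : R}
    (hc : x * u - u * x = c) (hcu : c * u = 0) : (x + c) * (1 - u) = (1 - u) * x := by
  rw [mul_one_sub, one_sub_mul, add_mul, hcu, add_zero, ← hc]
  abel

lemma simConj_of_mul_eq_mul {n : ℕ} {P Q : Mat n × Mat n} (A : (Mat n)ˣ)
    (h₁ : P.1 * A = A * Q.1) (h₂ : P.2 * A = A * Q.2) : SimConj P Q :=
  ⟨A, by rw [mul_assoc, h₁, ← mul_assoc, Units.inv_mul, one_mul],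
    by rw [mul_assoc, h₂, ← mul_assoc, Units.inv_mul, one_mul]⟩

lemma SimConj.isNilpotent_fst {n : ℕ} {P Q : Mat n × Mat n} (h : SimConj P Q)
    (hQ : IsNilpotent Q.1) : IsNilpotent P.1 := by
  obtain ⟨A, h₁, -⟩ := h
  have hP : P.1 = conjAlgHom A⁻¹ Q.1 := by
    rw [conjAlgHom_apply, h₁, inv_inv, ← mul_assoc, ← mul_assoc, Units.mul_inv, one_mul,
      mul_assoc, Units.mul_inv, mul_one]
  exact hP ▸ hQ.map _

lemma mul_Y0_apply {n : ℕ} (M : Mat n) (i j : Fin n) :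
    (M * Y0 n) i j = if h : 0 < (j : ℕ) then M i ⟨j - 1, by omega⟩ else 0 := by
  rw [mul_apply]
  split_ifs with h
  · rw [Fintype.sum_eq_single ⟨j - 1, by omega⟩ fun m hm => ?_]
    · rw [Y0, of_apply, if_pos (by simp only; omega), mul_one]
    · rw [Y0, of_apply, if_neg (fun hc => hm (Fin.ext (by simp only; omega))), mul_zero]
  · exact Finset.sum_eq_zero fun m _ => by rw [Y0, of_apply, if_neg (by omega), mul_zero]

lemma Y0_pow_apply (n k : ℕ) (i j : Fin n) :
    (Y0 n ^ k) i j = if (j : ℕ) = i + k then 1 else 0 := by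
  induction k generalizing j with
  | zero =>
    simp only [pow_zero, one_apply, add_zero, Fin.ext_iff]
    exact if_congr eq_comm rfl rfl
  | succ k ih =>
    rw [pow_succ, mul_Y0_apply]
    simp only [ih]
    split_ifs <;> first | rfl | omega

lemma Y0_pow_eq_zero {n k : ℕ} (h : n ≤ k) : Y0 n ^ k = 0 := by
  ext i j
  rw [Y0_pow_apply, Matrix.zero_apply, if_neg (by omega)]

lemma subd_mul_apply {n : ℕ} (a : ℕ → ℂ) (M : Mat n) (i j : Fin n) :
    (subd n a * M) i j = if h : 0 < (i : ℕ) then a i * M ⟨i - 1, by omega⟩ j else 0 := by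
  rw [mul_apply]
  split_ifs with h
  · rw [Fintype.sum_eq_single ⟨i - 1, by omega⟩ fun m hm => ?_]
    · rw [subd, of_apply, if_pos (by simp only; omega)]
    · rw [subd, of_apply, if_neg (fun hc => hm (Fin.ext (by simp only; omega))), zero_mul]
  · exact Finset.sum_eq_zero fun m _ => by rw [subd, of_apply, if_neg (by omega), zero_mul]

lemma mul_subd_apply {n : ℕ} (a : ℕ → ℂ) (M : Mat n) (i j : Fin n) :
    (M * subd n a) i j =
      if h : (j : ℕ) + 1 < n then M i ⟨j + 1, h⟩ * a (j + 1) else 0 := by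
  rw [mul_apply]
  split_ifs with h
  · rw [Fintype.sum_eq_single ⟨j + 1, h⟩ fun m hm => ?_]
    · rw [subd, of_apply, if_pos rfl]
    · rw [subd, of_apply, if_neg (fun hc => hm (Fin.ext hc)), mul_zero]
  · exact Finset.sum_eq_zero fun m _ => by rw [subd, of_apply, if_neg (by omega), mul_zero]

lemma subd_pow_apply_eq_zero {n : ℕ} (a : ℕ → ℂ) {k : ℕ} {i j : Fin n}
    (h : (i : ℕ) < j + k) : (subd n a ^ k) i j = 0 := by
  induction k generalizing i with
  | zero => rw [pow_zero, one_apply, if_neg (by rintro rfl; omega)]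
  | succ k ih =>
    rw [pow_succ', subd_mul_apply]
    split_ifs
    · rw [ih (by simp only; omega), mul_zero]
    · rfl

lemma subd_pow_self (n : ℕ) (a : ℕ → ℂ) : subd n a ^ n = 0 := by
  ext i j
  rw [subd_pow_apply_eq_zero a (by omega), Matrix.zero_apply]

lemma subd_mul_Y0_pow_apply {n : ℕ} (a : ℕ → ℂ) (i j : Fin n) :
    (subd n a * Y0 n ^ (n - 1)) i j = if (i : ℕ) = 1 ∧ (j : ℕ) = n - 1 then a 1 else 0 := by
  rw [subd_mul_apply]
  simp only [Y0_pow_apply]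
  by_cases h : (i : ℕ) = 1 ∧ (j : ℕ) = n - 1
  · rw [dif_pos (by omega), if_pos (by omega), if_pos h, h.1, mul_one]
  · rw [if_neg h]
    split_ifs <;> first | omega | rw [mul_zero] | rfl

lemma Y0_pow_mul_subd_apply {n : ℕ} (hn : 2 ≤ n) (a : ℕ → ℂ) (i j : Fin n) :
    (Y0 n ^ (n - 1) * subd n a) i j =
      if (i : ℕ) = 0 ∧ (j : ℕ) = n - 2 then a (n - 1) else 0 := by
  rw [mul_subd_apply]
  simp only [Y0_pow_apply]
  by_cases h : (i : ℕ) = 0 ∧ (j : ℕ) = n - 2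
  · rw [dif_pos (by omega), if_pos (by omega), if_pos h, h.2, one_mul]
    congr 1
    omega
  · rw [if_neg h]
    split_ifs <;> first | omega | rw [zero_mul] | rfl

lemma subd_mul_Y0_pow_sub_Y0_pow_mul_subd {n : ℕ} (hn : 3 ≤ n) {a : ℕ → ℂ}
    (ha₁ : a 1 = 1) (ha : a (n - 1) = -1) :
    subd n a * Y0 n ^ (n - 1) - Y0 n ^ (n - 1) * subd n a = Y0 n ^ (n - 2) := by
  ext i j
  rw [Matrix.sub_apply, subd_mul_Y0_pow_apply, Y0_pow_mul_subd_apply (by omega), Y0_pow_apply]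
  split_ifs <;> simp_all <;> omega

lemma avec_one {n r : ℕ} (hr : 1 < r) : avec n r 1 = 1 := by
  rw [avec, if_pos hr, Nat.cast_one]

lemma avec_sub_one {n r : ℕ} (hr : r < n) : avec n r (n - 1) = -1 := by
  rw [avec, if_neg (by omega), Nat.cast_sub (by omega), Nat.cast_one]
  ring

theorem middle_points_fixed_general (n r : ℕ) (hr1 : 1 < r) (hr2 : r < n) :
    SimConj (subd n (avec n r) + Y0 n ^ (n - 2), Y0 n) (subd n (avec n r), Y0 n) ∧
    IsNilpotent (subd n (avec n r) + Y0 n ^ (n - 2)) := by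
  have hN : IsNilpotent (Y0 n ^ (n - 1)) :=
    ⟨2, by rw [← pow_mul]; exact Y0_pow_eq_zero (by omega)⟩
  have hCN : Y0 n ^ (n - 2) * Y0 n ^ (n - 1) = 0 := by
    rw [← pow_add]; exact Y0_pow_eq_zero (by omega)
  have hconj : SimConj (subd n (avec n r) + Y0 n ^ (n - 2), Y0 n) (subd n (avec n r), Y0 n) :=
    simConj_of_mul_eq_mul hN.isUnit_one_sub.unit
      (add_mul_one_sub_eq_one_sub_mul (subd_mul_Y0_pow_sub_Y0_pow_mul_subd (by omega)
        (avec_one hr1) (avec_sub_one hr2)) hCN)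
      ((Commute.one_right _).sub_right (Commute.self_pow _ _)).eq
  exact ⟨hconj, hconj.isNilpotent_fst ⟨n, subd_pow_self n _⟩⟩

/-- For `1 < r < n`, the pair `(X(a(r)) + Y₀^{n-2}, Y₀)` is simultaneously conjugate to
`(X(a(r)), Y₀)`; in particular `X(a(r)) + Y₀^{n-2}` is nilpotent. -/
theorem middle_points_fixed (n r : ℕ) (hn : 3 ≤ n) (hr1 : 1 < r) (hr2 : r < n) :
    SimConj (subd n (avec n r) + Y0 n ^ (n - 2), Y0 n) (subd n (avec n r), Y0 n) ∧
    IsNilpotent (subd n (avec n r) + Y0 n ^ (n - 2)) :=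
  middle_points_fixed_general n r hr1 hr2

end
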